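/- Let G = (V,E) be a graph, C ⊆ V, and suppose D is a set of directed edges of G forming vertex-disjoint directed paths and cycles (each vertex has in-degree ≤ 1 and out-degree ≤ 1 in D) with exactly one path, from s to t. Suppose removing C from G yields components Y₁,…,Y_k. If, for each vertex of C, the D-edges incident to it are known, then t is determined: either t ∈ C, or t lies in the unique component Y_i into which the number of known D-edges entering Y_i exceeds the number leaving Y_i (counting the start appropriately if s ∈ Y_i). -/

import Mathlib

/-!
Read `D` as a unit flow from `s` to `t`: every vertex `u` satisfies
`in(u) + [u = s] = out(u) + [u = t]`. Summing this over a component `Y` of `G - C`, the edges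
inside `Y` cancel, and since `D`-edges leaving or entering `Y` must pass through `C`,
`#(C → Y) + [s ∈ Y] = #(Y → C) + [t ∈ Y]`. So `t ∈ Y` exactly when the left side exceeds
`#(Y → C)`, and `t ∈ C` when this happens for no component.
-/

/-- The graph `G` with the vertices of `C` avoided: edges of `G` with both
endpoints outside `C`. Its reachability classes on `Cᶜ` are the connected
components `Y₁, …, Y_k` of `G` with `C` removed. -/
def avoidGraph {V : Type*} (G : SimpleGraph V) (C : Set V) : SimpleGraph V where
  Adj a b := G.Adj a b ∧ a ∉ C ∧ b ∉ C
  symm := ⟨fun _ _ ⟨h, ha, hb⟩ => ⟨h.symm, hb, ha⟩⟩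
  loopless := ⟨fun a ⟨h, _, _⟩ => G.loopless.irrefl a h⟩

open Finset

section Degrees

variable {α : Type*} [DecidableEq α] (D : Finset (α × α))

def inDeg (u : α) : ℕ := #{e ∈ D | e.2 = u}

def outDeg (u : α) : ℕ := #{e ∈ D | e.1 = u}

lemma sum_inDeg (S : Finset α) : ∑ u ∈ S, inDeg D u = #{e ∈ D | e.2 ∈ S} := by
  simp only [inDeg, card_eq_sum_ones, sum_filter]
  rw [sum_comm]
  simp only [sum_ite_eq, sum_boole, Nat.cast_id]

lemma sum_outDeg (S : Finset α) : ∑ u ∈ S, outDeg D u = #{e ∈ D | e.1 ∈ S} := by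
  simp only [outDeg, card_eq_sum_ones, sum_filter]
  rw [sum_comm]
  simp only [sum_ite_eq, sum_boole, Nat.cast_id]

lemma card_filter_notMem_mem_add_sum_outDeg (S : Finset α) :
    #{e ∈ D | e.1 ∉ S ∧ e.2 ∈ S} + ∑ u ∈ S, outDeg D u =
      #{e ∈ D | e.1 ∈ S ∧ e.2 ∉ S} + ∑ u ∈ S, inDeg D u := by
  have hin : #{e ∈ D | e.2 ∈ S} =
      #{e ∈ D | e.1 ∈ S ∧ e.2 ∈ S} + #{e ∈ D | e.1 ∉ S ∧ e.2 ∈ S} := by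
    rw [← card_filter_add_card_filter_not (s := {e ∈ D | e.2 ∈ S}) (fun e => e.1 ∈ S),
      filter_filter, filter_filter]
    simp only [and_comm]
  have hout : #{e ∈ D | e.1 ∈ S} =
      #{e ∈ D | e.1 ∈ S ∧ e.2 ∈ S} + #{e ∈ D | e.1 ∈ S ∧ e.2 ∉ S} := by
    rw [← card_filter_add_card_filter_not (s := {e ∈ D | e.1 ∈ S}) (fun e => e.2 ∈ S),
      filter_filter, filter_filter]
  rw [sum_inDeg, sum_outDeg]
  omega

variable {D} {s t : α}

lemma card_filter_notMem_mem_add_ite_eq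
    (hdeg : ∀ u, inDeg D u + (if u = s then 1 else 0) = outDeg D u + (if u = t then 1 else 0))
    (S : Finset α) :
    #{e ∈ D | e.1 ∉ S ∧ e.2 ∈ S} + (if s ∈ S then 1 else 0) =
      #{e ∈ D | e.1 ∈ S ∧ e.2 ∉ S} + (if t ∈ S then 1 else 0) := by
  have hsum : ∑ u ∈ S, inDeg D u + (if s ∈ S then 1 else 0) =
      ∑ u ∈ S, outDeg D u + (if t ∈ S then 1 else 0) := by
    simpa only [sum_add_distrib, sum_ite_eq'] using sum_congr rfl fun u _ => hdeg u
  have := card_filter_notMem_mem_add_sum_outDeg D S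
  omega

lemma one_le_outDeg_of_reflTransGen (h : Relation.ReflTransGen (fun a b => (a, b) ∈ D) s t)
    (hst : s ≠ t) : 1 ≤ outDeg D s := by
  obtain rfl | ⟨c, hc, -⟩ := h.cases_head
  · exact absurd rfl hst
  · exact card_pos.2 ⟨(s, c), mem_filter.2 ⟨hc, rfl⟩⟩

lemma one_le_inDeg_of_reflTransGen (h : Relation.ReflTransGen (fun a b => (a, b) ∈ D) s t)
    (hst : s ≠ t) : 1 ≤ inDeg D t := by
  obtain rfl | ⟨c, -, hc⟩ := h.cases_tail
  · exact absurd rfl hst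
  · exact card_pos.2 ⟨(c, t), mem_filter.2 ⟨hc, rfl⟩⟩

lemma inDeg_add_ite_eq_outDeg_add_ite
    (hout : ∀ u, outDeg D u ≤ 1) (hin : ∀ u, inDeg D u ≤ 1)
    (hs : inDeg D s = 0) (ht : outDeg D t = 0)
    (hreach : Relation.ReflTransGen (fun a b => (a, b) ∈ D) s t)
    (hend : ∀ v, outDeg D v = 0 → 1 ≤ inDeg D v → v = t)
    (hstart : ∀ v, inDeg D v = 0 → 1 ≤ outDeg D v → v = s) (u : α) :
    inDeg D u + (if u = s then 1 else 0) = outDeg D u + (if u = t then 1 else 0) := by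
  by_cases hus : u = s <;> by_cases hut : u = t
  · subst hus hut
    simp only [hs, ht]
  · subst hus
    have := one_le_outDeg_of_reflTransGen hreach hut
    have := hout u
    simp only [hs, if_pos, if_neg hut]
    omega
  · subst hut
    have := one_le_inDeg_of_reflTransGen hreach (Ne.symm hus)
    have := hin u
    simp only [ht, if_pos, if_neg hus]
    omega
  · simp only [if_neg hus, if_neg hut]
    by_contra hne
    have := hout u
    have := hin u
    rcases Nat.lt_or_gt_of_ne hne with h | h
    · exact hus (hstart u (by omega) (by omega))
    · exact hut (hend u (by omega) (by omega))

end Degrees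

section Components

variable {V : Type*} {G : SimpleGraph V} {C : Set V} {v w : V}

lemma notMem_of_avoidGraph_reachable (hv : v ∉ C) (h : (avoidGraph G C).Reachable v w) :
    w ∉ C := by
  rw [SimpleGraph.reachable_iff_reflTransGen] at h
  obtain rfl | ⟨_, -, -, -, hw⟩ := h.cases_tail
  exacts [hv, hw]

lemma avoidGraph_reachable_of_adj (hv : v ∉ C) (h : (avoidGraph G C).Reachable v w) {x : V}
    (hadj : G.Adj w x) (hx : x ∉ C) : (avoidGraph G C).Reachable v x :=
  h.trans (SimpleGraph.Adj.reachable ⟨hadj, notMem_of_avoidGraph_reachable hv h, hx⟩)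

lemma avoidGraph_mem_and_reachable_iff (hv : v ∉ C) {a b : V} (hab : G.Adj a b) :
    a ∈ C ∧ (avoidGraph G C).Reachable v b ↔
      ¬(avoidGraph G C).Reachable v a ∧ (avoidGraph G C).Reachable v b := by
  refine ⟨fun ⟨ha, hb⟩ => ⟨fun h => notMem_of_avoidGraph_reachable hv h ha, hb⟩,
    fun ⟨ha, hb⟩ => ⟨?_, hb⟩⟩
  by_contra haC
  exact ha (avoidGraph_reachable_of_adj hv hb hab.symm haC)

lemma avoidGraph_reachable_and_mem_iff (hv : v ∉ C) {a b : V} (hab : G.Adj a b) :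
    (avoidGraph G C).Reachable v a ∧ b ∈ C ↔
      (avoidGraph G C).Reachable v a ∧ ¬(avoidGraph G C).Reachable v b := by
  rw [and_comm, avoidGraph_mem_and_reachable_iff hv hab.symm, and_comm]

open Classical in
lemma ncard_into_component_add_ite_eq [Fintype V] [DecidableEq V] {D : Finset (V × V)} {s t : V}
    (hadj : ∀ e ∈ D, G.Adj e.1 e.2)
    (hdeg : ∀ u, inDeg D u + (if u = s then 1 else 0) = outDeg D u + (if u = t then 1 else 0))
    (hv : v ∉ C) :
    ({e : V × V | e ∈ D ∧ e.1 ∈ C ∧ e.2 ∈ {w | (avoidGraph G C).Reachable v w}}).ncard +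
        (if s ∈ {w | (avoidGraph G C).Reachable v w} then 1 else 0) =
      ({e : V × V | e ∈ D ∧ e.1 ∈ {w | (avoidGraph G C).Reachable v w} ∧ e.2 ∈ C}).ncard +
        (if t ∈ {w | (avoidGraph G C).Reachable v w} then 1 else 0) := by
  set S := {w | (avoidGraph G C).Reachable v w}.toFinset
  have hinto : {e : V × V | e ∈ D ∧ e.1 ∈ C ∧ e.2 ∈ {w | (avoidGraph G C).Reachable v w}} =
      ↑{e ∈ D | e.1 ∉ S ∧ e.2 ∈ S} := by
    ext e
    simp only [Set.mem_ofPred_eq, coe_filter, S, Set.mem_toFinset]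
    exact and_congr_right fun he => avoidGraph_mem_and_reachable_iff hv (hadj e he)
  have hfrom : {e : V × V | e ∈ D ∧ e.1 ∈ {w | (avoidGraph G C).Reachable v w} ∧ e.2 ∈ C} =
      ↑{e ∈ D | e.1 ∈ S ∧ e.2 ∉ S} := by
    ext e
    simp only [Set.mem_ofPred_eq, coe_filter, S, Set.mem_toFinset]
    exact and_congr_right fun he => avoidGraph_reachable_and_mem_iff hv (hadj e he)
  rw [hinto, hfrom, Set.ncard_coe_finset, Set.ncard_coe_finset]
  simpa only [S, Set.mem_toFinset] using card_filter_notMem_mem_add_ite_eq hdeg S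

end Components

open Classical in
/-- Observation 6 ("cut observation"): let `D` be a set of directed edges of `G`
in which every vertex has in- and out-degree at most one, forming
vertex-disjoint directed paths and cycles with exactly one (possibly trivial)
path, going from `s` to `t`.  Let `C ⊆ V` and let the components of `G` with
`C` removed be the reachability classes `comp v` (`v ∉ C`).  Knowing the
`D`-edges incident to `C`, the end-vertex `t` is determined: any component into
which strictly more known edges enter (counting the start if `s` lies there)
than leave contains `t`; and if there is no such component then `t ∈ C`. -/
theorem cut_observation
    (V : Type*) [Fintype V] [DecidableEq V]
    (G : SimpleGraph V) (C : Finset V) (D : Finset (V × V)) (s t : V)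
    (hadj : ∀ e ∈ D, G.Adj e.1 e.2)
    (hout : ∀ u : V, (D.filter fun e => e.1 = u).card ≤ 1)
    (hin : ∀ u : V, (D.filter fun e => e.2 = u).card ≤ 1)
    (hs : (D.filter fun e => e.2 = s).card = 0)
    (ht : (D.filter fun e => e.1 = t).card = 0)
    (hreach : Relation.ReflTransGen (fun a b => (a, b) ∈ D) s t)
    (hend : ∀ v : V, (D.filter fun e => e.1 = v).card = 0 →
      1 ≤ (D.filter fun e => e.2 = v).card → v = t)
    (hstart : ∀ v : V, (D.filter fun e => e.2 = v).card = 0 →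
      1 ≤ (D.filter fun e => e.1 = v).card → v = s) :
    (∀ v : V, v ∉ C →
      ({e : V × V | e ∈ D ∧ e.1 ∈ (↑C : Set V) ∧
          e.2 ∈ {w | (avoidGraph G ↑C).Reachable v w}} : Set (V × V)).ncard +
        (if s ∈ {w | (avoidGraph G ↑C).Reachable v w} then 1 else 0) >
      ({e : V × V | e ∈ D ∧ e.1 ∈ {w | (avoidGraph G ↑C).Reachable v w} ∧
          e.2 ∈ (↑C : Set V)} : Set (V × V)).ncard →
      t ∈ {w | (avoidGraph G ↑C).Reachable v w}) ∧
    ((∀ v : V, v ∉ C →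
      ({e : V × V | e ∈ D ∧ e.1 ∈ (↑C : Set V) ∧
          e.2 ∈ {w | (avoidGraph G ↑C).Reachable v w}} : Set (V × V)).ncard +
        (if s ∈ {w | (avoidGraph G ↑C).Reachable v w} then 1 else 0) ≤
      ({e : V × V | e ∈ D ∧ e.1 ∈ {w | (avoidGraph G ↑C).Reachable v w} ∧
          e.2 ∈ (↑C : Set V)} : Set (V × V)).ncard) →
      t ∈ C) := by
  have hflow := fun v (hv : v ∉ C) => ncard_into_component_add_ite_eq hadj
    (inDeg_add_ite_eq_outDeg_add_ite hout hin hs ht hreach hend hstart) hv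
  refine ⟨fun v hv hlt => ?_, fun hle => ?_⟩
  · by_contra htY
    have := hflow v hv
    rw [if_neg htY] at this
    omega
  · by_contra htC
    have htY : t ∈ {w | (avoidGraph G ↑C).Reachable t w} := .refl t
    have := hflow t htC
    rw [if_pos htY] at this
    have := hle t htC
    omega
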